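/- arXiv:2012.10959 — 3 statements merged into one kernel-verified Lean document; each statement's English description precedes it below -/
import Mathlib

section
/- Let J ∈ M_d(ℂ) ⊗ M_d(ℂ) be a Hermitian matrix with tr_B(J) = I_d (the Choi matrix of an HPTP map). Then the minimum of p₁ + p₂ over all (p₁, p₂, J₁, J₂) with J = J₁ − J₂, J₁ ≥ 0, J₂ ≥ 0, tr_B(J₁) = p₁ I_d, tr_B(J₂) = p₂ I_d equals the minimum of p₁ + p₂ over all (p₁, p₂, J₁, J₂) with J = J₁ − J₂, J₁ ≥ 0, J₂ ≥ 0, tr_B(J₁) ≤ p₁ I_d, tr_B(J₂) ≤ p₂ I_d. -/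
open scoped Kronecker ComplexOrder
open Matrix

noncomputable section

/-- `id_k ⊗ N` applied blockwise. -/
def idTensor {n m : Type*} (k : Type*)
    (N : Matrix n n ℂ → Matrix m m ℂ)
    (M : Matrix (k × n) (k × n) ℂ) : Matrix (k × m) (k × m) ℂ :=
  Matrix.of fun p q => N (Matrix.of fun a b => M (p.1, a) (q.1, b)) p.2 q.2

/-- Trace-preserving. -/
def IsTP {n m : Type*} [Fintype n] [Fintype m]
    (N : Matrix n n ℂ → Matrix m m ℂ) : Prop :=
  ∀ X, (N X).trace = X.trace

/-- Hermitian-preserving. -/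
def IsHP {n m : Type*} (N : Matrix n n ℂ → Matrix m m ℂ) : Prop :=
  ∀ X, X.IsHermitian → (N X).IsHermitian

/-- Completely positive: for every `k`, `id_k ⊗ N` preserves positive semidefiniteness. -/
def IsCP {n m : Type*} [Fintype n] [Fintype m]
    (N : Matrix n n ℂ → Matrix m m ℂ) : Prop :=
  ∀ (k : ℕ) (M : Matrix (Fin k × n) (Fin k × n) ℂ),
    M.PosSemidef → (idTensor (Fin k) N M).PosSemidef

/-- Completely positive and trace-preserving (quantum channel). -/
def IsCPTP {n m : Type*} [Fintype n] [Fintype m]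
    (N : Matrix n n ℂ → Matrix m m ℂ) : Prop :=
  IsLinearMap ℂ N ∧ IsCP N ∧ IsTP N

/-- Completely positive and trace non-increasing. -/
def IsCPTN {n m : Type*} [Fintype n] [Fintype m]
    (N : Matrix n n ℂ → Matrix m m ℂ) : Prop :=
  IsLinearMap ℂ N ∧ IsCP N ∧ ∀ X : Matrix n n ℂ, X.PosSemidef → (N X).trace ≤ X.trace

/-- Costs of finite quasiprobability decompositions of `N` into CPTP maps. -/
def decompCosts {n m : Type*} [Fintype n] [Fintype m]
    (N : Matrix n n ℂ → Matrix m m ℂ) : Set ℝ :=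
  { c | ∃ (s : ℕ) (η : Fin s → ℝ) (O : Fin s → (Matrix n n ℂ → Matrix m m ℂ)),
      (∀ i, IsCPTP (O i)) ∧ (∀ X, N X = ∑ i, (η i : ℂ) • O i X) ∧ c = ∑ i, |η i| }

/-- The physical implementability `ν(N)`. -/
noncomputable def nu {n m : Type*} [Fintype n] [Fintype m]
    (N : Matrix n n ℂ → Matrix m m ℂ) : ℝ :=
  Real.logb 2 (sInf (decompCosts N))

/-- The Choi matrix of a linear map. -/
def choiMatrix {n m : Type*} [DecidableEq n]
    (N : Matrix n n ℂ → Matrix m m ℂ) : Matrix (n × m) (n × m) ℂ :=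
  Matrix.of fun p q => N (Matrix.single p.1 q.1 1) p.2 q.2

/-- Partial trace over the second tensor factor. -/
def ptraceB {n m : Type*} [Fintype m] (J : Matrix (n × m) (n × m) ℂ) :
    Matrix n n ℂ :=
  Matrix.of fun i j => ∑ a, J (i, a) (j, a)

/-- The trace norm of a matrix. -/
noncomputable def traceNorm {k : Type*} [Fintype k] [DecidableEq k]
    (X : Matrix k k ℂ) : ℝ :=
  (((Matrix.posSemidef_conjTranspose_mul_self X).1.eigenvectorUnitary.1 *
      Matrix.diagonal (((↑) : ℝ → ℂ) ∘ (√·) ∘ (Matrix.posSemidef_conjTranspose_mul_self X).1.eigenvalues) *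
      (star (Matrix.posSemidef_conjTranspose_mul_self X).1.eigenvectorUnitary : Matrix k k ℂ)).trace).re

/-- Tensor product of two maps. -/
def tensorMap {n₁ n₂ m₂ : Type*} [Fintype n₁] [DecidableEq n₁]
    (M : Matrix n₁ n₁ ℂ → Matrix n₁ n₁ ℂ) (N : Matrix n₂ n₂ ℂ → Matrix m₂ m₂ ℂ)
    (X : Matrix (n₁ × n₂) (n₁ × n₂) ℂ) : Matrix (n₁ × m₂) (n₁ × m₂) ℂ :=
  ∑ i : n₁, ∑ j : n₁,
    (M (Matrix.single i j 1)) ⊗ₖ (N (Matrix.of fun a b => X (i, a) (j, b)))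

/-!
Taking partial traces in `J = J₁ - J₂` gives `tr_B J₁ - tr_B J₂ = I`, so an exact decomposition has
`p₁ = p₂ + 1` and cost `2 p₁ - 1`, where `d p₁ = tr J₁`. The trace attains its minimum over the
closed set of admissible `J₁` because positive semidefinite matrices of bounded trace form a compact
set (their operator norm is at most their trace). Conversely, a relaxed decomposition becomes an
exact one of no larger cost by adding to both `J₁` and `J₂` the positive matrix `Dᵢ ⊗ I / d`, where
`Dᵢ = pᵢ I - tr_B Jᵢ` is the slack of whichever side keeps the new cost `2 p₁ - 1` or `2 p₂ + 1`
at most `p₁ + p₂`.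
-/

section PartialTrace

variable {n m : Type*} [Fintype m]

lemma ptraceB_add (A B : Matrix (n × m) (n × m) ℂ) :
    ptraceB (A + B) = ptraceB A + ptraceB B := by
  ext i j
  simp [ptraceB, Finset.sum_add_distrib]

lemma ptraceB_sub (A B : Matrix (n × m) (n × m) ℂ) :
    ptraceB (A - B) = ptraceB A - ptraceB B := by
  ext i j
  simp [ptraceB, Finset.sum_sub_distrib]

lemma ptraceB_smul (c : ℂ) (A : Matrix (n × m) (n × m) ℂ) :
    ptraceB (c • A) = c • ptraceB A := by
  ext i j
  simp [ptraceB, Finset.mul_sum]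

lemma continuous_ptraceB : Continuous (ptraceB : Matrix (n × m) (n × m) ℂ → Matrix n n ℂ) := by
  unfold ptraceB
  fun_prop

lemma trace_ptraceB [Fintype n] (A : Matrix (n × m) (n × m) ℂ) :
    (ptraceB A).trace = A.trace := by
  simp [Matrix.trace, ptraceB, Fintype.sum_prod_type]

variable [DecidableEq m]

lemma ptraceB_kronecker_one (E : Matrix n n ℂ) :
    ptraceB (E ⊗ₖ (1 : Matrix m m ℂ)) = (Fintype.card m : ℂ) • E := by
  ext i j
  simp [ptraceB, mul_comm]

lemma ptraceB_one [DecidableEq n] :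
    ptraceB (1 : Matrix (n × m) (n × m) ℂ) = (Fintype.card m : ℂ) • 1 := by
  rw [← Matrix.one_kronecker_one, ptraceB_kronecker_one]

lemma exists_posSemidef_ptraceB_eq [Fintype n] [Nonempty m] {D : Matrix n n ℂ}
    (hD : D.PosSemidef) : ∃ C : Matrix (n × m) (n × m) ℂ, C.PosSemidef ∧ ptraceB C = D := by
  have hm : (Fintype.card m : ℂ) ≠ 0 := by exact_mod_cast Fintype.card_ne_zero
  refine ⟨(((Fintype.card m : ℝ)⁻¹ : ℝ) : ℂ) • (D ⊗ₖ (1 : Matrix m m ℂ)),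
    (hD.kronecker Matrix.PosSemidef.one).smul
      (Complex.zero_le_real.2 (inv_nonneg.2 (Nat.cast_nonneg _))), ?_⟩
  rw [ptraceB_smul, ptraceB_kronecker_one, smul_smul]
  push_cast
  rw [inv_mul_cancel₀ hm, one_smul]

end PartialTrace

lemma ofReal_smul_one_injective {n : Type*} [DecidableEq n] [Nonempty n] :
    Function.Injective fun p : ℝ => (p : ℂ) • (1 : Matrix n n ℂ) := by
  intro a b h
  simpa using congrFun (congrFun h (Classical.arbitrary n)) (Classical.arbitrary n)

lemma isClosed_range_ofReal_smul_one {n : Type*} [Fintype n] [DecidableEq n] :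
    IsClosed (Set.range fun p : ℝ => (p : ℂ) • (1 : Matrix n n ℂ)) := by
  simp_rw [Complex.coe_smul, ← Submodule.span_singleton_eq_range]
  exact Submodule.closed_of_finiteDimensional _

section CompactSublevel

open scoped MatrixOrder Matrix.Norms.L2Operator

variable {n : Type*} [Fintype n] [DecidableEq n]

lemma norm_le_re_trace_of_nonneg {A : Matrix n n ℂ} (hA : 0 ≤ A) : ‖A‖ ≤ A.trace.re := by
  rcases isEmpty_or_nonempty n with hn | hn
  · simp [Subsingleton.elim A 0]
  obtain ⟨i, hi⟩ : ‖A‖ ∈ Set.range hA.posSemidef.1.eigenvalues := by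
    rw [← hA.posSemidef.1.spectrum_real_eq_range_eigenvalues]
    exact CStarAlgebra.norm_mem_spectrum_of_nonneg hA
  rw [← hi, hA.posSemidef.1.trace_eq_sum_eigenvalues, Complex.re_sum]
  exact Finset.single_le_sum (fun j _ => hA.posSemidef.eigenvalues_nonneg j) (Finset.mem_univ i)

lemma isCompact_setOf_nonneg_re_trace_le (t : ℝ) :
    IsCompact {A : Matrix n n ℂ | 0 ≤ A ∧ A.trace.re ≤ t} := by
  refine Metric.isCompact_of_isClosed_isBounded
    (CStarAlgebra.isClosed_nonneg.inter
      (isClosed_le (Complex.continuous_re.comp continuous_id.matrix_trace) continuous_const)) ?_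
  exact (Metric.isBounded_closedBall (x := 0) (r := t)).subset fun A hA =>
    mem_closedBall_zero_iff.2 ((norm_le_re_trace_of_nonneg hA.1).trans hA.2)

lemma exists_isMinOn_re_trace {K : Set (Matrix n n ℂ)} (hK : IsClosed K) (hK0 : ∀ A ∈ K, 0 ≤ A)
    (hne : K.Nonempty) : ∃ A ∈ K, IsMinOn (fun A => A.trace.re) K A := by
  obtain ⟨A₀, hA₀⟩ := hne
  have hcont : Continuous fun A : Matrix n n ℂ => A.trace.re :=
    Complex.continuous_re.comp continuous_id.matrix_trace
  have hL : IsCompact (K ∩ {A | A.trace.re ≤ A₀.trace.re}) :=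
    (isCompact_setOf_nonneg_re_trace_le _).of_isClosed_subset
      (hK.inter (isClosed_le hcont continuous_const)) fun A hA => ⟨hK0 A hA.1, hA.2⟩
  have hA₀L : A₀ ∈ K ∩ {A | A.trace.re ≤ A₀.trace.re} := ⟨hA₀, Set.mem_ofPred.2 le_rfl⟩
  obtain ⟨A, hA, hmin⟩ := hL.exists_isMinOn ⟨A₀, hA₀L⟩ hcont.continuousOn
  rw [isMinOn_iff] at hmin
  refine ⟨A, hA.1, isMinOn_iff.2 fun B hB => ?_⟩
  rcases le_total B.trace.re A₀.trace.re with h | h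
  · exact hmin B ⟨hB, h⟩
  · exact (hmin A₀ hA₀L).trans h

end CompactSublevel

section DecompCosts

variable {n m : Type*} [Fintype m] [DecidableEq n]

def exactDecompCosts (J : Matrix (n × m) (n × m) ℂ) : Set ℝ :=
  { c : ℝ | ∃ (p₁ p₂ : ℝ) (J₁ J₂ : Matrix (n × m) (n × m) ℂ),
    J = J₁ - J₂ ∧ J₁.PosSemidef ∧ J₂.PosSemidef ∧
    ptraceB J₁ = (p₁ : ℂ) • 1 ∧ ptraceB J₂ = (p₂ : ℂ) • 1 ∧ c = p₁ + p₂ }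

def relaxedDecompCosts (J : Matrix (n × m) (n × m) ℂ) : Set ℝ :=
  { c : ℝ | ∃ (p₁ p₂ : ℝ) (J₁ J₂ : Matrix (n × m) (n × m) ℂ),
    J = J₁ - J₂ ∧ J₁.PosSemidef ∧ J₂.PosSemidef ∧
    ((p₁ : ℂ) • 1 - ptraceB J₁).PosSemidef ∧
    ((p₂ : ℂ) • 1 - ptraceB J₂).PosSemidef ∧ c = p₁ + p₂ }

lemma exactDecompCosts_subset_relaxedDecompCosts (J : Matrix (n × m) (n × m) ℂ) :
    exactDecompCosts J ⊆ relaxedDecompCosts J := by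
  rintro c ⟨p₁, p₂, J₁, J₂, hJ, h₁, h₂, hp₁, hp₂, hc⟩
  refine ⟨p₁, p₂, J₁, J₂, hJ, h₁, h₂, ?_, ?_, hc⟩ <;> simp [hp₁, hp₂, Matrix.PosSemidef.zero]

lemma exists_mem_exactDecompCosts_le [Fintype n] [DecidableEq m] [Nonempty m]
    {J : Matrix (n × m) (n × m) ℂ} (htr : ptraceB J = 1) {c : ℝ}
    (hc : c ∈ relaxedDecompCosts J) : ∃ c' ∈ exactDecompCosts J, c' ≤ c := by
  obtain ⟨p₁, p₂, J₁, J₂, rfl, h₁, h₂, hD₁, hD₂, rfl⟩ := hc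
  rw [ptraceB_sub] at htr
  -- Once `tr_B C = pᵢ • 1 - tr_B Jᵢ`, the other part `J₁ + C` or `J₂ + C` also has scalar
  -- partial trace, because `tr_B J₁ - tr_B J₂ = 1`.
  rcases le_total p₁ (p₂ + 1) with h | h
  · obtain ⟨C, hC, hCD⟩ := exists_posSemidef_ptraceB_eq (m := m) hD₁
    refine ⟨p₁ + (p₁ - 1), ⟨p₁, p₁ - 1, J₁ + C, J₂ + C, by abel, h₁.add hC, h₂.add hC,
      ?_, ?_, rfl⟩, by linarith⟩
    · rw [ptraceB_add, hCD]
      abel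
    · rw [ptraceB_add, hCD]
      push_cast
      linear_combination (norm := module) -htr
  · obtain ⟨C, hC, hCD⟩ := exists_posSemidef_ptraceB_eq (m := m) hD₂
    refine ⟨(p₂ + 1) + p₂, ⟨p₂ + 1, p₂, J₁ + C, J₂ + C, by abel, h₁.add hC, h₂.add hC,
      ?_, ?_, rfl⟩, by linarith⟩
    · rw [ptraceB_add, hCD]
      push_cast
      linear_combination (norm := module) htr
    · rw [ptraceB_add, hCD]
      abel

lemma re_trace_eq_of_ptraceB_eq [Fintype n] {A : Matrix (n × m) (n × m) ℂ} {p : ℝ}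
    (h : ptraceB A = (p : ℂ) • 1) : A.trace.re = p * Fintype.card n := by
  simp [← trace_ptraceB, h]

open scoped MatrixOrder Matrix.Norms.L2Operator in
lemma exists_isLeast_exactDecompCosts [Fintype n] [DecidableEq m] [Nonempty n]
    {J : Matrix (n × m) (n × m) ℂ} (hJ : J.IsHermitian) (htr : ptraceB J = 1) :
    ∃ c, IsLeast (exactDecompCosts J) c := by
  -- Feasible exact decompositions are `J = A - (A - J)` with `A ∈ K`.
  set K : Set (Matrix (n × m) (n × m) ℂ) :=
    {A | 0 ≤ A ∧ J ≤ A ∧ ptraceB A ∈ Set.range fun p : ℝ => (p : ℂ) • (1 : Matrix n n ℂ)}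
  have hK : IsClosed K := CStarAlgebra.isClosed_nonneg.inter <|
    (isClosed_le continuous_const continuous_id).inter <|
      isClosed_range_ofReal_smul_one.preimage continuous_ptraceB
  have hA₀ : J + (‖J‖ : ℂ) • 1 ∈ K := by
    have hshift : 0 ≤ ((‖J‖ : ℂ) • 1 : Matrix (n × m) (n × m) ℂ) :=
      (Matrix.PosSemidef.one.smul (Complex.zero_le_real.2 (norm_nonneg J))).nonneg
    refine ⟨?_, le_add_of_nonneg_right hshift, 1 + ‖J‖ * Fintype.card m, ?_⟩
    · have := IsSelfAdjoint.neg_algebraMap_norm_le_self hJ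
      rwa [neg_le_iff_add_nonneg, Algebra.algebraMap_eq_smul_one, ← Complex.coe_smul] at this
    · rw [ptraceB_add, ptraceB_smul, htr, ptraceB_one]
      push_cast
      module
  obtain ⟨A, ⟨hA, hJA, p, hp⟩, hmin⟩ := exists_isMinOn_re_trace hK (fun A hA => hA.1) ⟨_, hA₀⟩
  refine ⟨2 * p - 1, ⟨p, p - 1, A, A - J, (sub_sub_cancel A J).symm, hA.posSemidef, hJA,
    hp.symm, ?_, by ring⟩, ?_⟩
  · rw [ptraceB_sub, ← hp, htr]
    push_cast
    module
  rintro c ⟨p₁, p₂, J₁, J₂, rfl, h₁, h₂, hp₁, hp₂, rfl⟩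
  have hdiff : p₁ - p₂ = 1 := ofReal_smul_one_injective (n := n) <| by
    simpa [ptraceB_sub, hp₁, hp₂, sub_smul] using htr
  have hJ₁ : J₁ ∈ K := ⟨h₁.nonneg, sub_le_self _ h₂.nonneg, p₁, hp₁.symm⟩
  have hpp₁ : p * Fintype.card n ≤ p₁ * Fintype.card n := by
    simpa [re_trace_eq_of_ptraceB_eq hp.symm, re_trace_eq_of_ptraceB_eq hp₁] using hmin hJ₁
  have hp_le : p ≤ p₁ := le_of_mul_le_mul_right hpp₁ (by exact_mod_cast Fintype.card_pos)
  linarith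

end DecompCosts

/-- for a Hermitian Choi matrix `J` with `tr_B J = I`, the minimum of
`p₁ + p₂` over decompositions `J = J₁ - J₂` with `tr_B Jᵢ = pᵢ I` equals the minimum
over decompositions with `tr_B Jᵢ ≤ pᵢ I`. -/
theorem choi_primal_eq_relaxed_primal {d : ℕ} (hd : 0 < d)
    (J : Matrix (Fin d × Fin d) (Fin d × Fin d) ℂ)
    (hJ : J.IsHermitian) (htr : ptraceB J = 1) :
    ∃ c : ℝ,
      IsLeast { c : ℝ | ∃ (p₁ p₂ : ℝ) (J₁ J₂ : Matrix (Fin d × Fin d) (Fin d × Fin d) ℂ),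
        J = J₁ - J₂ ∧ J₁.PosSemidef ∧ J₂.PosSemidef ∧
        ptraceB J₁ = (p₁ : ℂ) • 1 ∧ ptraceB J₂ = (p₂ : ℂ) • 1 ∧ c = p₁ + p₂ } c ∧
      IsLeast { c : ℝ | ∃ (p₁ p₂ : ℝ) (J₁ J₂ : Matrix (Fin d × Fin d) (Fin d × Fin d) ℂ),
        J = J₁ - J₂ ∧ J₁.PosSemidef ∧ J₂.PosSemidef ∧
        ((p₁ : ℂ) • 1 - ptraceB J₁).PosSemidef ∧
        ((p₂ : ℂ) • 1 - ptraceB J₂).PosSemidef ∧ c = p₁ + p₂ } c := by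
  have : Nonempty (Fin d) := ⟨⟨0, hd⟩⟩
  obtain ⟨c, hc⟩ := exists_isLeast_exactDecompCosts hJ htr
  refine ⟨c, hc, exactDecompCosts_subset_relaxedDecompCosts J hc.1, fun c' hc' => ?_⟩
  obtain ⟨c'', hc'', hle⟩ := exists_mem_exactDecompCosts_le htr hc'
  exact (hc.2 hc'').trans hle

end
end

section
/- Let N be an HPTP linear map on M_d(ℂ). Then ν(N) = 0 if and only if N is CPTP (completely positive and trace-preserving). -/
open scoped Kronecker ComplexOrder
open Matrix

noncomputable section

/-!
Everything goes through the Choi matrix `J(N)`, which is positive semidefinite exactly when `N`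
is completely positive. Taking traces in `N = ∑ ηᵢ Oᵢ` gives `∑ ηᵢ = 1`, so every decomposition
costs `∑ |ηᵢ| ≥ 1`, and a CPTP map costs `1`. Conversely `J(N) = ∑ ηᵢ J(Oᵢ)` with `J(Oᵢ) ≥ 0`
and `tr J(Oᵢ) = d`, so a decomposition of cost `c` gives `2 ⟪x, J(N) x⟫ ≥ -(c - 1) d ‖x‖²`;
letting `c` tend to the infimum `1` yields `J(N) ≥ 0`.
Since `sInf ∅ = 0 = logb 2 0`, this needs some decomposition to exist: adding a multiple of the
completely depolarizing channel, whose Choi matrix is a multiple of the identity, makes any HPTP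
map completely positive.
-/

open scoped MatrixOrder

section Choi

variable {n m : Type*}

theorem IsLinearMap.apply_eq_sum_choiMatrix [Fintype n] [DecidableEq n]
    {N : Matrix n n ℂ → Matrix m m ℂ} (hN : IsLinearMap ℂ N) (X : Matrix n n ℂ) (a b : m) :
    N X a b = ∑ i, ∑ j, X i j * choiMatrix N (i, a) (j, b) := by
  have hsingle : ∀ i j, Matrix.single i j (X i j) = X i j • Matrix.single i j 1 := fun i j => by
    rw [Matrix.smul_single, smul_eq_mul, mul_one]
  let L : Matrix n n ℂ →ₗ[ℂ] Matrix m m ℂ := hN.mk' N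
  change L X a b = _
  conv_lhs => rw [Matrix.matrix_eq_sum_single X]
  simp only [hsingle, map_sum, Matrix.sum_apply, LinearMap.map_smul]
  rfl

theorem IsLinearMap.map_conjTranspose_of_isHP {N : Matrix n n ℂ → Matrix m m ℂ}
    (hN : IsLinearMap ℂ N) (hHP : IsHP N) (X : Matrix n n ℂ) : N Xᴴ = (N X)ᴴ := by
  let L : Matrix n n ℂ →ₗ[ℂ] Matrix m m ℂ := hN.mk' N
  set H₁ := X + Xᴴ
  set H₂ := Complex.I • (Xᴴ - X)
  have hH₁ : (L H₁)ᴴ = L H₁ := hHP H₁ (Matrix.isHermitian_add_transpose_self X)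
  have hH₂ : (L H₂)ᴴ = L H₂ := hHP H₂ (by
    simp only [H₂, Matrix.IsHermitian, Matrix.conjTranspose_smul, Matrix.conjTranspose_sub,
      Matrix.conjTranspose_conjTranspose, Complex.star_def, Complex.conj_I, neg_smul, smul_sub]
    abel)
  have hX : (2 : ℂ) • X = H₁ + Complex.I • H₂ := by
    rw [smul_smul, Complex.I_mul_I]; module
  have hXH : (2 : ℂ) • Xᴴ = H₁ - Complex.I • H₂ := by
    rw [smul_smul, Complex.I_mul_I]; module
  apply smul_right_injective _ (two_ne_zero : (2 : ℂ) ≠ 0)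
  change (2 : ℂ) • L Xᴴ = (2 : ℂ) • (L X)ᴴ
  calc (2 : ℂ) • L Xᴴ = L H₁ - Complex.I • L H₂ := by
        rw [← L.map_smul, hXH, L.map_sub, L.map_smul]
    _ = (L H₁ + Complex.I • L H₂)ᴴ := by
      simp [Matrix.conjTranspose_smul, hH₁, hH₂, sub_eq_add_neg]
    _ = (2 : ℂ) • (L X)ᴴ := by
      rw [← L.map_smul, ← L.map_add, ← hX, L.map_smul, Matrix.conjTranspose_smul, star_ofNat]

theorem choiMatrix_isHermitian [DecidableEq n] {N : Matrix n n ℂ → Matrix m m ℂ}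
    (hN : IsLinearMap ℂ N) (hHP : IsHP N) : (choiMatrix N).IsHermitian := by
  ext ⟨i, a⟩ ⟨j, b⟩
  have hsingle : (Matrix.single j i (1 : ℂ))ᴴ = Matrix.single i j 1 := by
    ext; simp [Matrix.single_apply, and_comm]
  simp only [choiMatrix, Matrix.conjTranspose_apply, Matrix.of_apply, ← hsingle,
    hN.map_conjTranspose_of_isHP hHP]

theorem choiMatrix_trace [Fintype n] [DecidableEq n] [Fintype m]
    {N : Matrix n n ℂ → Matrix m m ℂ} (hTP : IsTP N) :
    (choiMatrix N).trace = Fintype.card n := by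
  rw [Matrix.trace, Fintype.sum_prod_type]
  change ∑ i, (N (Matrix.single i i 1)).trace = _
  simp [hTP _]

theorem choiMatrix_posSemidef_of_isCP [Fintype m] {d : ℕ}
    {N : Matrix (Fin d) (Fin d) ℂ → Matrix m m ℂ} (hCP : IsCP N) : (choiMatrix N).PosSemidef := by
  let ω : Fin d × Fin d → ℂ := fun p => if p.1 = p.2 then 1 else 0
  convert hCP d _ (Matrix.posSemidef_vecMulVec_self_star ω) using 1
  ext ⟨i, a⟩ ⟨j, b⟩
  simp only [choiMatrix, idTensor, Matrix.of_apply]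
  congr 2
  ext k l
  simp only [ω, Matrix.vecMulVec_apply, Matrix.single_apply, Pi.star_apply]
  by_cases i = k <;> by_cases j = l <;> simp_all

open scoped Kronecker in
/-- A factorisation `J(N) = B⋆ B` yields the Kraus form `(id ⊗ N)(M) = ∑ᵣ Kᵣ M Kᵣᴴ`. -/
theorem isCP_of_choiMatrix_posSemidef [Fintype n] [DecidableEq n] [Fintype m] [DecidableEq m]
    {N : Matrix n n ℂ → Matrix m m ℂ} (hN : IsLinearMap ℂ N) (hJ : (choiMatrix N).PosSemidef) :
    IsCP N := by
  obtain ⟨B, hB⟩ := CStarAlgebra.nonneg_iff_eq_star_mul_self.mp hJ.nonneg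
  intro k M hM
  let K : n × m → Matrix (Fin k × m) (Fin k × n) ℂ := fun r =>
    (1 : Matrix (Fin k) (Fin k) ℂ) ⊗ₖ Matrix.of fun a i => star (B r (i, a))
  have hKraus : idTensor (Fin k) N M = ∑ r, K r * M * (K r)ᴴ := by
    ext ⟨p, a⟩ ⟨q, b⟩
    have hK : ∀ r, (K r * M * (K r)ᴴ) (p, a) (q, b)
        = ∑ i, ∑ j, star (B r (i, a)) * M (p, i) (q, j) * B r (j, b) := fun r => by
      simp [K, Matrix.mul_apply, Fintype.sum_prod_type, Matrix.one_apply,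
        apply_ite (starRingEnd ℂ), Finset.sum_mul]
      exact Finset.sum_comm
    simp only [idTensor, Matrix.of_apply, hN.apply_eq_sum_choiMatrix, hB, Matrix.sum_apply, hK,
      Matrix.mul_apply, Matrix.star_apply, Finset.mul_sum]
    rw [eq_comm, Finset.sum_comm]
    refine Finset.sum_congr rfl fun i _ => ?_
    rw [Finset.sum_comm]
    exact Finset.sum_congr rfl fun j _ => Finset.sum_congr rfl fun r _ => by ring
  rw [hKraus]
  exact Matrix.posSemidef_sum _ fun r _ => hM.mul_mul_conjTranspose_same _

end Choi

theorem Matrix.PosSemidef.re_dotProduct_mulVec_le {ι : Type*} [Fintype ι] [DecidableEq ι]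
    {A : Matrix ι ι ℂ} (hA : A.PosSemidef) (x : ι → ℂ) :
    (star x ⬝ᵥ A *ᵥ x).re ≤ A.trace.re * ∑ i, ‖x i‖ ^ 2 := by
  obtain ⟨B, rfl⟩ := CStarAlgebra.nonneg_iff_eq_star_mul_self.mp hA.nonneg
  have hquad : (star x ⬝ᵥ (star B * B) *ᵥ x).re = ∑ w, ‖(B *ᵥ x) w‖ ^ 2 := by
    rw [← Matrix.mulVec_mulVec, Matrix.star_eq_conjTranspose, Matrix.dotProduct_mulVec,
      Matrix.vecMul_conjTranspose]
    simp [dotProduct, Complex.conj_mul', ← Complex.ofReal_pow]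
  have htrace : (star B * B).trace.re = ∑ w, ∑ q, ‖B w q‖ ^ 2 := by
    simp [Matrix.trace, Matrix.mul_apply, Complex.conj_mul', ← Complex.ofReal_pow]
    exact Finset.sum_comm
  rw [hquad, htrace, Finset.sum_mul]
  refine Finset.sum_le_sum fun w _ => ?_
  calc ‖(B *ᵥ x) w‖ ^ 2 ≤ (∑ q, ‖B w q‖ * ‖x q‖) ^ 2 := by
        gcongr
        exact (norm_sum_le _ _).trans_eq (by simp)
    _ ≤ (∑ q, ‖B w q‖ ^ 2) * ∑ q, ‖x q‖ ^ 2 := Finset.sum_mul_sq_le_sq_mul_sq _ _ _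

open scoped Matrix.Norms.L2Operator in
theorem Matrix.IsHermitian.exists_posSemidef_add_smul_one {ι : Type*} [Fintype ι]
    [DecidableEq ι] {A : Matrix ι ι ℂ} (hA : A.IsHermitian) :
    ∃ c : ℝ, 0 ≤ c ∧ (A + (c : ℂ) • (1 : Matrix ι ι ℂ)).PosSemidef := by
  refine ⟨‖A‖, norm_nonneg _, ?_⟩
  have h := IsSelfAdjoint.neg_algebraMap_norm_le_self (A := Matrix ι ι ℂ) hA
  rw [neg_le_iff_add_nonneg, Algebra.algebraMap_eq_smul_one] at h
  rw [← Matrix.nonneg_iff_posSemidef]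
  simpa [Complex.coe_smul] using h

def completelyDepolarizing (n m : Type*) [Fintype n] [Fintype m] [DecidableEq m]
    (X : Matrix n n ℂ) : Matrix m m ℂ :=
  (X.trace / Fintype.card m) • 1

section Depolarizing

variable (n m : Type*) [Fintype n] [Fintype m] [DecidableEq m]

theorem completelyDepolarizing_isLinearMap :
    IsLinearMap ℂ (completelyDepolarizing n m) where
  map_add X Y := by simp [completelyDepolarizing, add_div, add_smul]
  map_smul c X := by simp [completelyDepolarizing, mul_div_assoc, smul_smul]

theorem choiMatrix_completelyDepolarizing [DecidableEq n] :
    choiMatrix (completelyDepolarizing n m) = ((Fintype.card m : ℂ)⁻¹) • 1 := by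
  ext ⟨i, a⟩ ⟨j, b⟩
  by_cases hij : i = j <;> by_cases hab : a = b <;>
    simp [choiMatrix, completelyDepolarizing, Matrix.trace_single_eq_of_ne, Matrix.one_apply, *]

theorem completelyDepolarizing_isCPTP [DecidableEq n] [Nonempty m] :
    IsCPTP (completelyDepolarizing n m) := by
  refine ⟨completelyDepolarizing_isLinearMap n m, ?_, fun X => ?_⟩
  · refine isCP_of_choiMatrix_posSemidef (completelyDepolarizing_isLinearMap n m) ?_
    rw [choiMatrix_completelyDepolarizing]
    exact Matrix.PosSemidef.one.smul (by positivity)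
  · simp [completelyDepolarizing, Matrix.trace_smul]

end Depolarizing

section Decomposition

variable {n m : Type*} [Fintype n] [Fintype m]

theorem IsTP.sum_eq_one_of_decomposition [Nonempty n] {N : Matrix n n ℂ → Matrix m m ℂ}
    (hTP : IsTP N) {s : ℕ} {η : Fin s → ℝ} {O : Fin s → Matrix n n ℂ → Matrix m m ℂ}
    (hO : ∀ i, IsTP (O i)) (hN : ∀ X, N X = ∑ i, (η i : ℂ) • O i X) : ∑ i, η i = 1 := by
  classical
  let i₀ : n := Classical.arbitrary n
  have h := hTP (Matrix.single i₀ i₀ 1)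
  simp only [hN, Matrix.trace_sum, Matrix.trace_smul, fun i => hO i (Matrix.single i₀ i₀ 1),
    Matrix.trace_single_eq_same, smul_eq_mul, mul_one] at h
  exact_mod_cast h

theorem one_le_of_mem_decompCosts [Nonempty n] {N : Matrix n n ℂ → Matrix m m ℂ}
    (hTP : IsTP N) {c : ℝ} (hc : c ∈ decompCosts N) : 1 ≤ c := by
  obtain ⟨s, η, O, hO, hN, rfl⟩ := hc
  calc (1 : ℝ) = |∑ i, η i| := by
        rw [hTP.sum_eq_one_of_decomposition (fun i => (hO i).2.2) hN, abs_one]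
    _ ≤ ∑ i, |η i| := Finset.abs_sum_le_sum_abs _ _

theorem abs_add_abs_mem_decompCosts {N O₁ O₂ : Matrix n n ℂ → Matrix m m ℂ}
    (h₁ : IsCPTP O₁) (h₂ : IsCPTP O₂) (a b : ℝ)
    (hN : ∀ X, N X = (a : ℂ) • O₁ X + (b : ℂ) • O₂ X) : |a| + |b| ∈ decompCosts N :=
  ⟨2, ![a, b], ![O₁, O₂], fun i => by fin_cases i <;> assumption, by simpa using hN,
    by simp⟩

theorem sInf_decompCosts_eq_one [Nonempty n] {N : Matrix n n ℂ → Matrix m m ℂ}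
    (hN : IsCPTP N) : sInf (decompCosts N) = 1 :=
  IsLeast.csInf_eq ⟨by simpa using abs_add_abs_mem_decompCosts hN hN 1 0 (by simp),
    fun _ => one_le_of_mem_decompCosts hN.2.2⟩

theorem one_add_two_mul_mem_decompCosts [DecidableEq n] [DecidableEq m]
    {N P : Matrix n n ℂ → Matrix m m ℂ} (hN : IsLinearMap ℂ N) (hTP : IsTP N) (hP : IsCPTP P)
    {γ : ℝ} (hγ : 0 ≤ γ) (hJ : (choiMatrix N + (γ : ℂ) • choiMatrix P).PosSemidef) :
    1 + 2 * γ ∈ decompCosts N := by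
  have h1γ : ((1 + γ : ℝ) : ℂ) ≠ 0 := by exact_mod_cast (by positivity : (1 + γ) ≠ 0)
  let L : Matrix n n ℂ →ₗ[ℂ] Matrix m m ℂ :=
    ((1 + γ : ℝ) : ℂ)⁻¹ • (hN.mk' N + (γ : ℂ) • hP.1.mk' P)
  have hL : IsCPTP L := by
    refine ⟨L.isLinear, isCP_of_choiMatrix_posSemidef L.isLinear ?_, fun X => ?_⟩
    · have hchoi : choiMatrix L = (1 + γ)⁻¹ • (choiMatrix N + (γ : ℂ) • choiMatrix P) := by
        ext; simp [L, choiMatrix, Complex.real_smul]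
      rw [hchoi]
      exact hJ.smul (by positivity)
    · simp only [L, LinearMap.smul_apply, LinearMap.add_apply, IsLinearMap.mk'_apply,
        Matrix.trace_smul, Matrix.trace_add, hTP X, hP.2.2 X, smul_eq_mul]
      field_simp
      push_cast
      ring
  convert abs_add_abs_mem_decompCosts hL hP (1 + γ) (-γ) fun X => ?_ using 1
  · rw [abs_of_pos (by positivity), abs_neg, abs_of_nonneg hγ]
    ring
  · simp only [L, LinearMap.smul_apply, LinearMap.add_apply, IsLinearMap.mk'_apply, smul_smul,
      mul_inv_cancel₀ h1γ, one_smul, Complex.ofReal_neg, neg_smul, add_neg_cancel_right]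

theorem decompCosts_nonempty [DecidableEq n] [DecidableEq m] [Nonempty m]
    {N : Matrix n n ℂ → Matrix m m ℂ} (hN : IsLinearMap ℂ N) (hHP : IsHP N) (hTP : IsTP N) :
    (decompCosts N).Nonempty := by
  obtain ⟨c, hc, hJ⟩ := (choiMatrix_isHermitian hN hHP).exists_posSemidef_add_smul_one
  refine ⟨_, one_add_two_mul_mem_decompCosts hN hTP (completelyDepolarizing_isCPTP n m)
    (γ := c * Fintype.card m) (by positivity) ?_⟩
  rw [choiMatrix_completelyDepolarizing, smul_smul]
  convert hJ using 3
  push_cast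
  field_simp

end Decomposition

section Faithfulness

variable {d : ℕ} {m : Type*} [Fintype m]

theorem le_re_dotProduct_choiMatrix_of_mem_decompCosts [Nonempty (Fin d)]
    {N : Matrix (Fin d) (Fin d) ℂ → Matrix m m ℂ} (hTP : IsTP N) {c : ℝ}
    (hc : c ∈ decompCosts N) (x : Fin d × m → ℂ) :
    (1 - c) * (d * ∑ i, ‖x i‖ ^ 2) ≤ 2 * (star x ⬝ᵥ choiMatrix N *ᵥ x).re := by
  classical
  obtain ⟨s, η, O, hO, hN, rfl⟩ := hc
  set B : ℝ := d * ∑ i, ‖x i‖ ^ 2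
  let t : Fin s → ℝ := fun i => (star x ⬝ᵥ choiMatrix (O i) *ᵥ x).re
  have ht : ∀ i, 0 ≤ t i ∧ t i ≤ B := fun i => by
    have hJ := choiMatrix_posSemidef_of_isCP (hO i).2.1
    refine ⟨hJ.re_dotProduct_nonneg x, (hJ.re_dotProduct_mulVec_le x).trans_eq ?_⟩
    simp [B, choiMatrix_trace (hO i).2.2]
  have hchoi : choiMatrix N = ∑ i, (η i : ℂ) • choiMatrix (O i) := by
    ext; simp [choiMatrix, hN, Matrix.sum_apply]
  have hquad : (star x ⬝ᵥ choiMatrix N *ᵥ x).re = ∑ i, η i * t i := by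
    simp [t, hchoi, Matrix.sum_mulVec, dotProduct_sum, Matrix.smul_mulVec, Complex.re_sum]
  have hsum := hTP.sum_eq_one_of_decomposition (fun i => (hO i).2.2) hN
  calc (1 - ∑ i, |η i|) * B = ∑ i, (η i - |η i|) * B := by
        rw [← hsum, ← Finset.sum_sub_distrib, Finset.sum_mul]
    -- `(η - |η|) / 2` is the negative part of `η`, and `0 ≤ t ≤ B`
    _ ≤ ∑ i, 2 * (η i * t i) := Finset.sum_le_sum fun i _ => by
        obtain ⟨ht₀, htB⟩ := ht i
        rcases le_or_gt 0 (η i) with h | h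
        · rw [abs_of_nonneg h, sub_self, zero_mul]; positivity
        · rw [abs_of_neg h]; nlinarith
    _ = 2 * (star x ⬝ᵥ choiMatrix N *ᵥ x).re := by rw [hquad, Finset.mul_sum]

theorem choiMatrix_posSemidef_of_sInf_decompCosts_eq_one [Nonempty (Fin d)]
    {N : Matrix (Fin d) (Fin d) ℂ → Matrix m m ℂ} (hJ : (choiMatrix N).IsHermitian)
    (hTP : IsTP N) (hne : (decompCosts N).Nonempty) (hinf : sInf (decompCosts N) = 1) :
    (choiMatrix N).PosSemidef := by
  refine .of_dotProduct_mulVec_nonneg hJ fun x => ?_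
  set q := star x ⬝ᵥ choiMatrix N *ᵥ x
  let bound : Set ℝ := {c | (1 - c) * (d * ∑ i, ‖x i‖ ^ 2) ≤ 2 * q.re}
  have hclosed : IsClosed bound := isClosed_le (by fun_prop) continuous_const
  have hmem : sInf (decompCosts N) ∈ bound :=
    hclosed.closure_subset_iff.mpr
      (fun _ hc => le_re_dotProduct_choiMatrix_of_mem_decompCosts hTP hc x)
      (csInf_mem_closure hne ⟨1, fun c hc => one_le_of_mem_decompCosts hTP hc⟩)
  rw [hinf] at hmem
  refine Complex.nonneg_iff.mpr ⟨?_, (hJ.im_star_dotProduct_mulVec_self x).symm⟩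
  simpa [bound] using hmem

end Faithfulness

theorem nu_eq_zero_iff_sInf_decompCosts_eq_one {n m : Type*} [Fintype n] [Fintype m]
    {N : Matrix n n ℂ → Matrix m m ℂ} (hne : (decompCosts N).Nonempty)
    (hge : ∀ c ∈ decompCosts N, 1 ≤ c) : nu N = 0 ↔ sInf (decompCosts N) = 1 := by
  have hpos : 0 < sInf (decompCosts N) := zero_lt_one.trans_le (le_csInf hne hge)
  rw [nu, ← Real.logb_one (b := 2)]
  exact (Real.logb_injOn_pos one_lt_two).eq_iff hpos (Set.mem_Ioi.mpr one_pos)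

theorem nu_eq_zero_of_isEmpty {n m : Type*} [Fintype n] [Fintype m] [IsEmpty m]
    (N : Matrix n n ℂ → Matrix m m ℂ) : nu N = 0 := by
  have hmem : (0 : ℝ) ∈ decompCosts N :=
    ⟨0, Fin.elim0, Fin.elim0, fun i => i.elim0, fun _ => Subsingleton.elim _ _, by simp⟩
  have hinf : sInf (decompCosts N) = 0 := IsLeast.csInf_eq ⟨hmem, by
    rintro _ ⟨_, _, _, -, -, rfl⟩
    positivity⟩
  rw [nu, hinf, Real.logb_zero]

theorem isCP_of_isEmpty {n m : Type*} [Fintype n] [Fintype m] [IsEmpty m]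
    (N : Matrix n n ℂ → Matrix m m ℂ) : IsCP N := fun _ M _ => by
  rw [Subsingleton.elim (idTensor _ N M) 0]
  exact .zero

/-- faithfulness: an HPTP map has `ν(N) = 0` iff it is CPTP. -/
theorem nu_eq_zero_iff_cptp {d : ℕ}
    (N : Matrix (Fin d) (Fin d) ℂ → Matrix (Fin d) (Fin d) ℂ)
    (hlin : IsLinearMap ℂ N) (hHP : IsHP N) (hTP : IsTP N) :
    nu N = 0 ↔ IsCPTP N := by
  rcases isEmpty_or_nonempty (Fin d) with hd | hd
  · exact iff_of_true (nu_eq_zero_of_isEmpty N) ⟨hlin, isCP_of_isEmpty N, hTP⟩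
  have hne := decompCosts_nonempty hlin hHP hTP
  rw [nu_eq_zero_iff_sInf_decompCosts_eq_one hne fun _ => one_le_of_mem_decompCosts hTP]
  refine ⟨fun hinf => ⟨hlin, isCP_of_choiMatrix_posSemidef hlin ?_, hTP⟩,
    sInf_decompCosts_eq_one⟩
  exact choiMatrix_posSemidef_of_sInf_decompCosts_eq_one (choiMatrix_isHermitian hlin hHP) hTP
    hne hinf

end
end

section
/- Let y ∈ [0,1) and N ∈ [0,1], and let A_{y,N} be the generalized amplitude damping channel on M₂(ℂ) with Kraus operators A₁ = √(1−N)(|0⟩⟨0| + √(1−y)|1⟩⟨1|), A₂ = √(y(1−N)) |0⟩⟨1|, A₃ = √N(√(1−y)|0⟩⟨0| + |1⟩⟨1|), A₄ = √(yN) |1⟩⟨0|, i.e., A_{y,N}(ρ) = ∑_{k=1}^{4} A_k ρ A_k†. Then A_{y,N} is invertible as a linear map on M₂(ℂ) and 2^{ν(A_{y,N}⁻¹)} = (1 + |y − 2Ny|)/(1 − y). -/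
open scoped Kronecker ComplexOrder
open Matrix

noncomputable section

/-- The generalized amplitude damping channel with parameters `y, N`. -/
def gadChannel (y nN : ℝ) (X : Matrix (Fin 2) (Fin 2) ℂ) : Matrix (Fin 2) (Fin 2) ℂ :=
  ((Real.sqrt (1 - nN) : ℂ) • !![1, 0; 0, (Real.sqrt (1 - y) : ℂ)]) * X *
    ((Real.sqrt (1 - nN) : ℂ) • !![1, 0; 0, (Real.sqrt (1 - y) : ℂ)])ᴴ +
  !![0, (Real.sqrt (y * (1 - nN)) : ℂ); 0, 0] * X *
    !![0, (Real.sqrt (y * (1 - nN)) : ℂ); 0, 0]ᴴ +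
  ((Real.sqrt nN : ℂ) • !![(Real.sqrt (1 - y) : ℂ), 0; 0, 1]) * X *
    ((Real.sqrt nN : ℂ) • !![(Real.sqrt (1 - y) : ℂ), 0; 0, 1])ᴴ +
  !![0, 0; (Real.sqrt (y * nN) : ℂ), 0] * X * !![0, 0; (Real.sqrt (y * nN) : ℂ), 0]ᴴ

/-!
Both `A_{y,N}` and its inverse act on a qubit by a real `2 × 2` matrix on the diagonal
`(ρ₀₀, ρ₁₁)` and by a scalar on the off-diagonal entries, so the inverse is explicit.

Lower bound: a CPTP map sends `|j⟩⟨j|` to a state, whose two diagonal entries differ by at most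
`1`; hence every decomposition `∑ ηᵢ Oᵢ` costs at least
`(A⁻¹ |j⟩⟨j|)_jj - (A⁻¹ |j⟩⟨j|)_kk`, and the two choices of `j` give `(1 ± (y - 2Ny)) / (1 - y)`.

Upper bound: `A⁻¹ = (1 + p) D - p C`, where `D` only shrinks the off-diagonal entries (a convex
combination of the identity and the complete dephasing), `C` is a measure-and-prepare channel and
`p = y max(N, 1 - N) / (1 - y)`; this costs `1 + 2p`, the same value.
-/

section Kraus

variable {ι n m : Type*} [Fintype ι] [Fintype n] [Fintype m]

def krausMap (K : ι → Matrix m n ℂ) (X : Matrix n n ℂ) : Matrix m m ℂ :=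
  ∑ i, K i * X * (K i)ᴴ

theorem isCPTP_krausMap [DecidableEq n] (K : ι → Matrix m n ℂ) (hK : ∑ i, (K i)ᴴ * K i = 1) :
    IsCPTP (krausMap K) := by
  refine ⟨⟨fun X Y => ?_, fun c X => ?_⟩, fun k M hM => ?_, fun X => ?_⟩
  · simp [krausMap, Matrix.mul_add, Matrix.add_mul, Finset.sum_add_distrib]
  · simp [krausMap, Finset.smul_sum]
  · have h : idTensor (Fin k) (krausMap K) M
        = ∑ i, ((1 : Matrix (Fin k) (Fin k) ℂ) ⊗ₖ K i) * M *
            ((1 : Matrix (Fin k) (Fin k) ℂ) ⊗ₖ K i)ᴴ := by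
      ext p q
      simp only [idTensor, krausMap, Matrix.sum_apply, Matrix.of_apply, Matrix.mul_apply,
        Matrix.conjTranspose_apply, Matrix.kroneckerMap_apply, Fintype.sum_prod_type,
        Matrix.one_apply, star_zero, apply_ite (star : ℂ → ℂ), mul_ite, ite_mul,
        zero_mul, mul_zero, one_mul, Finset.sum_ite_irrel, Finset.sum_const_zero,
        Finset.sum_ite_eq, Finset.mem_univ, if_true]
    rw [h]
    exact Finset.sum_induction _ _ (fun _ _ => .add) .zero
      fun i _ => hM.mul_mul_conjTranspose_same _
  · calc (krausMap K X).trace = ∑ i, ((K i)ᴴ * K i * X).trace := by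
          simp only [krausMap, Matrix.trace_sum]
          exact Finset.sum_congr rfl fun i _ => Matrix.trace_mul_cycle _ _ _
      _ = ((∑ i, (K i)ᴴ * K i) * X).trace := by rw [Finset.sum_mul, Matrix.trace_sum]
      _ = X.trace := by rw [hK, one_mul]

end Kraus

theorem isCPTP_id {n : Type*} [Fintype n] : IsCPTP (fun X : Matrix n n ℂ => X) :=
  ⟨⟨fun _ _ => rfl, fun _ _ => rfl⟩, fun _ _ hM => hM, fun _ => rfl⟩

theorem IsCP.posSemidef_apply {n m : Type*} [Fintype n] [Fintype m]
    {O : Matrix n n ℂ → Matrix m m ℂ} (hO : IsCP O) {ρ : Matrix n n ℂ} (hρ : ρ.PosSemidef) :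
    (O ρ).PosSemidef :=
  (hO 1 (ρ.submatrix Prod.snd Prod.snd) (hρ.submatrix _)).submatrix (fun q => ((0 : Fin 1), q))

theorem Matrix.PosSemidef.abs_re_diag_sub_le_one {m : Type*} [Fintype m] {σ : Matrix m m ℂ}
    (hσ : σ.PosSemidef) (htr : σ.trace = 1) {j k : m} (hjk : j ≠ k) :
    |(σ j j).re - (σ k k).re| ≤ 1 := by
  classical
  have hdiag : ∀ i, 0 ≤ (σ i i).re := fun i => (Complex.nonneg_iff.mp hσ.diag_nonneg).1
  have hpair : (σ j j).re + (σ k k).re ≤ 1 := by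
    calc (σ j j).re + (σ k k).re = ∑ i ∈ {j, k}, (σ i i).re := by rw [Finset.sum_pair hjk]
      _ ≤ ∑ i, (σ i i).re := Finset.sum_le_univ_sum_of_nonneg hdiag
      _ = 1 := by rw [← Complex.re_sum]; exact congrArg Complex.re htr
  rw [abs_le]
  constructor <;> linarith [hdiag j, hdiag k]

theorem re_diag_sub_le_of_mem_decompCosts {n m : Type*} [Fintype n] [Fintype m]
    {N : Matrix n n ℂ → Matrix m m ℂ} {ρ : Matrix n n ℂ} (hρ : ρ.PosSemidef)
    (htr : ρ.trace = 1) {j k : m} (hjk : j ≠ k) {a : ℝ} (ha : a ∈ decompCosts N) :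
    (N ρ j j).re - (N ρ k k).re ≤ a := by
  obtain ⟨s, η, O, hO, hN, rfl⟩ := ha
  have hbound : ∀ i, |((O i ρ) j j).re - ((O i ρ) k k).re| ≤ 1 := fun i =>
    ((hO i).2.1.posSemidef_apply hρ).abs_re_diag_sub_le_one (((hO i).2.2 ρ).trans htr) hjk
  calc (N ρ j j).re - (N ρ k k).re = ∑ i, η i * (((O i ρ) j j).re - ((O i ρ) k k).re) := by
        simp only [hN, Matrix.sum_apply, Matrix.smul_apply, smul_eq_mul, Complex.re_sum,
          Complex.re_ofReal_mul, mul_sub, Finset.sum_sub_distrib]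
    _ ≤ ∑ i, |η i| := Finset.sum_le_sum fun i _ => by
        calc _ ≤ |η i| * |((O i ρ) j j).re - ((O i ρ) k k).re| := by
              rw [← abs_mul]; exact le_abs_self _
          _ ≤ |η i| := mul_le_of_le_one_right (abs_nonneg _) (hbound i)

theorem Complex.ofReal_sqrt_mul_self {x : ℝ} (hx : 0 ≤ x) : (√x : ℂ) * √x = x := by
  rw [← Complex.ofReal_mul, Real.mul_self_sqrt hx]

section PhaseCovariant

variable {n : Type*} [Fintype n] [DecidableEq n]

-- Named for its covariance under conjugation by diagonal unitaries.
def phaseCovariantMap (T : Matrix n n ℝ) (c : ℝ) (X : Matrix n n ℂ) : Matrix n n ℂ :=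
  Matrix.of fun i j => if i = j then ∑ k, (T i k : ℂ) * X k k else (c : ℂ) * X i j

theorem isLinearMap_phaseCovariantMap (T : Matrix n n ℝ) (c : ℝ) :
    IsLinearMap ℂ (phaseCovariantMap T c) := by
  constructor
  · intro X Y
    ext i j
    by_cases h : i = j <;> simp [phaseCovariantMap, h, mul_add, Finset.sum_add_distrib]
  · intro a X
    ext i j
    by_cases h : i = j <;> simp [phaseCovariantMap, h, Finset.mul_sum, mul_left_comm]

theorem phaseCovariantMap_one_one (X : Matrix n n ℂ) : phaseCovariantMap 1 1 X = X := by
  ext i j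
  by_cases h : i = j <;> simp [phaseCovariantMap, Matrix.one_apply, h, apply_ite, ite_mul]

theorem phaseCovariantMap_phaseCovariantMap (T T' : Matrix n n ℝ) (c c' : ℝ)
    (X : Matrix n n ℂ) :
    phaseCovariantMap T c (phaseCovariantMap T' c' X) = phaseCovariantMap (T * T') (c * c') X := by
  ext i j
  by_cases h : i = j
  · simp only [phaseCovariantMap, Matrix.of_apply, h, if_true, Matrix.mul_apply]
    push_cast
    simp only [Finset.mul_sum, Finset.sum_mul, mul_assoc]
    exact Finset.sum_comm
  · simp [phaseCovariantMap, h, mul_assoc]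

theorem sum_smul_phaseCovariantMap {ι : Type*} [Fintype ι] (η : ι → ℝ)
    (T : ι → Matrix n n ℝ) (c : ι → ℝ) (X : Matrix n n ℂ) :
    ∑ i, (η i : ℂ) • phaseCovariantMap (T i) (c i) X
      = phaseCovariantMap (∑ i, η i • T i) (∑ i, η i * c i) X := by
  ext a b
  by_cases h : a = b
  · simp only [phaseCovariantMap, Matrix.sum_apply, Matrix.smul_apply, Matrix.of_apply, h,
      if_true, smul_eq_mul]
    push_cast
    simp only [Finset.mul_sum, Finset.sum_mul, mul_assoc]
    exact Finset.sum_comm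
  · simp [phaseCovariantMap, Matrix.sum_apply, h, Finset.sum_mul, mul_assoc]

theorem phaseCovariantMap_single_apply (T : Matrix n n ℝ) (c : ℝ) (i j : n) :
    phaseCovariantMap T c (Matrix.single j j 1) i i = T i j := by
  simp [phaseCovariantMap, Matrix.single_apply]

theorem krausMap_sqrt_single {T : Matrix n n ℝ} (hT : ∀ i j, 0 ≤ T i j) (X : Matrix n n ℂ) :
    krausMap (fun p : n × n => Matrix.single p.1 p.2 (√(T p.1 p.2) : ℂ)) X
      = phaseCovariantMap T 0 X := by
  ext a b
  by_cases h : a = b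
  · subst h
    simp [krausMap, phaseCovariantMap, Matrix.sum_apply, Matrix.conjTranspose_single,
      Fintype.sum_prod_type, Matrix.single_apply, mul_right_comm _ (X _ _),
      Complex.ofReal_sqrt_mul_self, hT]
  · simp only [krausMap, phaseCovariantMap, Matrix.sum_apply, Matrix.conjTranspose_single,
      Matrix.single_mul_mul_single, Fintype.sum_prod_type, Matrix.single_apply,
      Matrix.of_apply, h, if_false, Complex.ofReal_zero, zero_mul]
    exact Finset.sum_eq_zero fun i _ => Finset.sum_eq_zero fun j _ =>
      if_neg fun hij => h (hij.1.symm.trans hij.2)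

/-- Measure in the computational basis, then prepare according to the stochastic matrix `T`. -/
theorem isCPTP_phaseCovariantMap_zero {T : Matrix n n ℝ} (hT : T ∈ Matrix.colStochastic ℝ n) :
    IsCPTP (phaseCovariantMap T 0) := by
  rw [Matrix.mem_colStochastic_iff_sum] at hT
  have hK : ∑ p : n × n, (Matrix.single p.1 p.2 (√(T p.1 p.2) : ℂ))ᴴ
      * Matrix.single p.1 p.2 (√(T p.1 p.2) : ℂ) = 1 := by
    ext a b
    by_cases h : a = b
    · subst h
      simp only [Matrix.sum_apply, Matrix.conjTranspose_single, RCLike.star_def,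
        Complex.conj_ofReal, Matrix.single_mul_single_same, hT.1, Complex.ofReal_sqrt_mul_self,
        Matrix.single_apply, and_self, Fintype.sum_prod_type, Finset.sum_ite_eq',
        Finset.mem_univ, if_true, Matrix.one_apply_eq]
      exact_mod_cast hT.2 a
    · simp only [Matrix.sum_apply, Matrix.conjTranspose_single, Matrix.single_mul_single_same,
        Matrix.single_apply, Matrix.one_apply, h, if_false, Fintype.sum_prod_type]
      exact Finset.sum_eq_zero fun i _ => Finset.sum_eq_zero fun j _ =>
        if_neg fun hj => h (hj.1.symm.trans hj.2)
  have h := isCPTP_krausMap _ hK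
  rwa [funext (krausMap_sqrt_single hT.1)] at h

theorem one_add_two_mul_mem_decompCosts_phaseCovariantMap {C : Matrix n n ℝ}
    (hC : C ∈ Matrix.colStochastic ℝ n) {p s : ℝ} (hp : 0 ≤ p) (hs0 : 0 ≤ s) (hs1 : s ≤ 1) :
    1 + 2 * p ∈ decompCosts (phaseCovariantMap ((1 + p) • 1 - p • C) ((1 + p) * s)) := by
  refine ⟨3, ![(1 + p) * s, (1 + p) * (1 - s), -p],
    fun i => phaseCovariantMap (![1, 1, C] i) (![1, 0, 0] i), ?_, fun X => ?_, ?_⟩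
  · intro i
    fin_cases i
    · simpa [funext phaseCovariantMap_one_one] using isCPTP_id
    · exact isCPTP_phaseCovariantMap_zero (one_mem _)
    · exact isCPTP_phaseCovariantMap_zero hC
  · rw [sum_smul_phaseCovariantMap]
    congr 1
    · simp only [Fin.sum_univ_three, Matrix.cons_val]
      module
    · simp [Fin.sum_univ_three]
  · simp only [Fin.sum_univ_three, Matrix.cons_val_zero, Matrix.cons_val_one, Matrix.cons_val,
      abs_neg, abs_of_nonneg hp, abs_of_nonneg (add_nonneg zero_le_one hp), abs_mul,
      abs_of_nonneg hs0, abs_of_nonneg (sub_nonneg.2 hs1)]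
    ring

theorem sub_le_of_mem_decompCosts_phaseCovariantMap {T : Matrix n n ℝ} {c a : ℝ}
    (ha : a ∈ decompCosts (phaseCovariantMap T c)) {j k : n} (hjk : j ≠ k) :
    T j j - T k j ≤ a := by
  have hpure : (Matrix.single j j (1 : ℂ)).PosSemidef := by
    simpa [Matrix.conjTranspose_single] using
      Matrix.posSemidef_conjTranspose_mul_self (Matrix.single j j (1 : ℂ))
  simpa [phaseCovariantMap_single_apply] using
    re_diag_sub_le_of_mem_decompCosts hpure (by simp) hjk ha

end PhaseCovariant

theorem Matrix.mem_colStochastic_fin_two {a b : ℝ} (ha0 : 0 ≤ a) (ha1 : a ≤ 1) (hb0 : 0 ≤ b)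
    (hb1 : b ≤ 1) : !![1 - a, b; a, 1 - b] ∈ Matrix.colStochastic ℝ (Fin 2) := by
  refine Matrix.mem_colStochastic_iff_sum.2 ⟨fun i j => ?_, fun j => ?_⟩
  · fin_cases i <;> fin_cases j <;> simp <;> linarith
  · fin_cases j <;> simp

def gadDiag (y nN : ℝ) : Matrix (Fin 2) (Fin 2) ℝ :=
  !![1 - nN * y, y * (1 - nN); nN * y, 1 - y + nN * y]

theorem gadChannel_eq_phaseCovariantMap {y nN : ℝ} (hy0 : 0 ≤ y) (hy1 : y ≤ 1) (hN0 : 0 ≤ nN)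
    (hN1 : nN ≤ 1) : gadChannel y nN = phaseCovariantMap (gadDiag y nN) √(1 - y) := by
  have h1 := Complex.ofReal_sqrt_mul_self (sub_nonneg.2 hN1)
  have h2 := Complex.ofReal_sqrt_mul_self (sub_nonneg.2 hy1)
  have h3 := Complex.ofReal_sqrt_mul_self (mul_nonneg hy0 (sub_nonneg.2 hN1))
  have h4 := Complex.ofReal_sqrt_mul_self hN0
  have h5 := Complex.ofReal_sqrt_mul_self (mul_nonneg hy0 hN0)
  push_cast at h1 h2 h3 h5
  funext X
  ext i j
  fin_cases i <;> fin_cases j <;>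
    simp [gadChannel, phaseCovariantMap, gadDiag, Matrix.mul_apply, Matrix.vecMul, dotProduct,
      Fin.sum_univ_two, Matrix.conjTranspose_apply]
  · linear_combination X 0 0 * h1 + X 0 0 * (√(1 - y) : ℂ) ^ 2 * h4 + X 0 0 * nN * h2
      + X 1 1 * h3
  · linear_combination X 0 1 * √(1 - y) * h1 + X 0 1 * √(1 - y) * h4
  · linear_combination X 1 0 * √(1 - y) * h1 + X 1 0 * √(1 - y) * h4
  · linear_combination X 1 1 * (√(1 - y) : ℂ) ^ 2 * h1 + X 1 1 * h4 + X 1 1 * (1 - nN) * h2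
      + X 0 0 * h5

theorem det_gadDiag (y nN : ℝ) : (gadDiag y nN).det = 1 - y := by
  rw [gadDiag, Matrix.det_fin_two_of]
  ring

theorem inv_gadDiag (y nN : ℝ) :
    (gadDiag y nN)⁻¹ = (1 - y)⁻¹ • !![1 - y + nN * y, -(y * (1 - nN)); -(nN * y), 1 - nN * y] := by
  rw [Matrix.inv_def, det_gadDiag, Ring.inverse_eq_inv', gadDiag, Matrix.adjugate_fin_two_of]

/-- The splitting holds for every `m ≠ 0`; the subtracted matrix is stochastic exactly when
`max N (1 - N) ≤ m`, and the least such `m` gives the cheapest decomposition. -/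
theorem inv_gadDiag_eq_sub {y nN m : ℝ} (hy : y ≠ 1) (hm : m ≠ 0) :
    (gadDiag y nN)⁻¹ = (1 + y * m / (1 - y)) • 1
      - (y * m / (1 - y)) • !![1 - nN / m, (1 - nN) / m; nN / m, 1 - (1 - nN) / m] := by
  have hy' : 1 - y ≠ 0 := sub_ne_zero.2 hy.symm
  rw [inv_gadDiag]
  ext i j
  fin_cases i <;> fin_cases j <;> simp <;> field_simp <;> ring

-- AM-GM: `2 √(1 - y) ≤ 1 + (1 - y)`.
theorem inv_sqrt_one_sub_le {y : ℝ} (hy1 : y < 1) :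
    (√(1 - y))⁻¹ ≤ 1 + y / (2 * (1 - y)) := by
  set t := √(1 - y)
  have ht : 0 < t := Real.sqrt_pos.2 (sub_pos.2 hy1)
  have hy : y = 1 - t ^ 2 := by rw [Real.sq_sqrt (sub_pos.2 hy1).le]; ring
  rw [inv_le_iff_one_le_mul₀ ht, hy, sub_sub_cancel, ← sub_nonneg]
  have key : (1 + (1 - t ^ 2) / (2 * t ^ 2)) * t - 1 = (t - 1) ^ 2 / (2 * t) := by
    field_simp
    ring
  rw [key]
  positivity

theorem isLeast_decompCosts_inv_gadChannel {y nN : ℝ} (hy0 : 0 ≤ y) (hy1 : y < 1)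
    (hN0 : 0 ≤ nN) (hN1 : nN ≤ 1) :
    IsLeast (decompCosts (phaseCovariantMap (gadDiag y nN)⁻¹ (√(1 - y))⁻¹))
      ((1 + |y - 2 * nN * y|) / (1 - y)) := by
  have h1y : 0 < 1 - y := sub_pos.2 hy1
  constructor
  · set m := max nN (1 - nN) with hm_def
    set p := y * m / (1 - y) with hp_def
    have hm : 1 / 2 ≤ m := by linarith [le_max_left nN (1 - nN), le_max_right nN (1 - nN)]
    have hm0 : 0 < m := by linarith
    have hp : 0 ≤ p := by positivity
    have hcost : 1 + 2 * p = (1 + |y - 2 * nN * y|) / (1 - y) := by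
      have h2m : 2 * m = 1 + |1 - 2 * nN| := by
        rcases le_total nN (1 / 2) with h | h
        · rw [hm_def, max_eq_right (by linarith), abs_of_nonneg (by linarith)]; ring
        · rw [hm_def, max_eq_left (by linarith), abs_of_nonpos (by linarith)]; ring
      rw [hp_def, show y - 2 * nN * y = y * (1 - 2 * nN) by ring, abs_mul, abs_of_nonneg hy0]
      field_simp
      linear_combination y * h2m
    have hsqrt : (√(1 - y))⁻¹ ≤ 1 + p := by
      refine (inv_sqrt_one_sub_le hy1).trans ?_
      gcongr
      rw [hp_def, div_le_div_iff₀ (by positivity) h1y]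
      nlinarith [mul_nonneg (mul_nonneg hy0 h1y.le) (by linarith : 0 ≤ 2 * m - 1)]
    have hs : (√(1 - y))⁻¹ = (1 + p) * ((√(1 - y))⁻¹ / (1 + p)) := by
      field_simp
    rw [← hcost, inv_gadDiag_eq_sub hy1.ne hm0.ne', hs]
    exact one_add_two_mul_mem_decompCosts_phaseCovariantMap
      (Matrix.mem_colStochastic_fin_two (by positivity) ((div_le_one hm0).2 (le_max_left _ _))
        (div_nonneg (sub_nonneg.2 hN1) hm0.le) ((div_le_one hm0).2 (le_max_right _ _)))
      hp (by positivity) ((div_le_one (by positivity)).2 hsqrt)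
  · intro a ha
    have h0 := sub_le_of_mem_decompCosts_phaseCovariantMap ha (j := 0) (k := 1) (by decide)
    have h1 := sub_le_of_mem_decompCosts_phaseCovariantMap ha (j := 1) (k := 0) (by decide)
    simp only [inv_gadDiag, Matrix.smul_apply, Matrix.of_apply, Matrix.cons_val',
      Matrix.cons_val_zero, Matrix.cons_val_fin_one, Matrix.cons_val_one, smul_eq_mul, mul_neg,
      sub_neg_eq_add] at h0 h1
    rw [← mul_add, inv_mul_le_iff₀ h1y] at h0 h1
    rw [div_le_iff₀ h1y, ← le_sub_iff_add_le', abs_le]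
    constructor <;> linarith

/-- the generalized amplitude damping channel `A_{y,N}` (with `0 ≤ y < 1`,
`0 ≤ N ≤ 1`) is invertible and `2^{ν(A_{y,N}⁻¹)} = (1 + |y − 2Ny|)/(1 − y)`. -/
theorem nu_generalized_amplitude_damping_inverse (y nN : ℝ)
    (hy0 : 0 ≤ y) (hy1 : y < 1) (hN0 : 0 ≤ nN) (hN1 : nN ≤ 1) :
    ∃ Ainv : Matrix (Fin 2) (Fin 2) ℂ → Matrix (Fin 2) (Fin 2) ℂ,
      IsLinearMap ℂ Ainv ∧ (∀ X, Ainv (gadChannel y nN X) = X) ∧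
      (2 : ℝ) ^ nu Ainv = (1 + |y - 2 * nN * y|) / (1 - y) := by
  have h1y : 0 < 1 - y := sub_pos.2 hy1
  refine ⟨phaseCovariantMap (gadDiag y nN)⁻¹ (√(1 - y))⁻¹, isLinearMap_phaseCovariantMap _ _,
    fun X => ?_, ?_⟩
  · rw [gadChannel_eq_phaseCovariantMap hy0 hy1.le hN0 hN1, phaseCovariantMap_phaseCovariantMap,
      Matrix.nonsing_inv_mul _ (by rw [det_gadDiag]; exact h1y.ne'.isUnit),
      inv_mul_cancel₀ (Real.sqrt_pos.2 h1y).ne', phaseCovariantMap_one_one]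
  · rw [nu, (isLeast_decompCosts_inv_gadChannel hy0 hy1 hN0 hN1).csInf_eq]
    exact Real.rpow_logb two_pos (by norm_num) (div_pos (by positivity) h1y)

end
end
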